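/- arXiv:1205.3119 — 2 statements merged into one kernel-verified Lean document; each statement's English description precedes it below -/
import Mathlib

section
/- Let |ψ⟩ = Σ_{η ∈ [d]^n} c_η |η⟩ be a normalized pure state of n qudits and let γ ⊆ {1,…,n} define a bipartition. Then the linear entropy of the reduced state satisfies S_L(ρ_γ) := 2(1 − Tr(ρ_γ²)) = Σ_{η₁ ≠ η₂} |c_{η₁} c_{η₂} − c_{η₁^γ} c_{η₂^γ}|², where (η₁^γ, η₂^γ) = P_γ(η₁, η₂) exchanges the components of η₁ and η₂ at positions in γ. -/
open Finset

/-- The swap operator `P_γ` on pairs of multi-indices: the first output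
(`η₁^γ`) takes its `γ`-components from `η₂` and the rest from `η₁`. -/
def swapIdx {n d : ℕ} (γ : Finset (Fin n)) (η₁ η₂ : Fin n → Fin d) : Fin n → Fin d :=
  fun k => if k ∈ γ then η₂ k else η₁ k

/-- Merge a `γ`-part and a `γ̄`-part into a full multi-index. -/
def mergeIdx {n d : ℕ} (γ : Finset (Fin n)) (α : {k // k ∈ γ} → Fin d)
    (β : {k // k ∉ γ} → Fin d) : Fin n → Fin d :=
  fun k => if h : k ∈ γ then α ⟨k, h⟩ else β ⟨k, h⟩

/-- The reduced density matrix `ρ_γ = Tr_{γ̄}(|ψ⟩⟨ψ|)` of the pure state with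
coefficients `c` in the computational basis. -/
noncomputable def redMat {n d : ℕ} (γ : Finset (Fin n)) (c : (Fin n → Fin d) → ℂ) :
    Matrix ({k // k ∈ γ} → Fin d) ({k // k ∈ γ} → Fin d) ℂ :=
  fun α₁ α₂ => ∑ β : {k // k ∉ γ} → Fin d,
    c (mergeIdx γ α₁ β) * (starRingEnd ℂ) (c (mergeIdx γ α₂ β))

/-!
Write `a(η₁, η₂) = c η₁ c η₂` and let `σ` be the involution `(η₁, η₂) ↦ P_γ(η₁, η₂)`.
Splitting each multi-index into its `γ`- and `γ̄`-parts shows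
`Tr ρ_γ² = Σ a · conj (a ∘ σ)`. Expanding `Σ |a - a ∘ σ|²` over all pairs gives
`Σ |a|² + Σ |a ∘ σ|² - 2 Re Σ a · conj (a ∘ σ)`, and both square sums equal
`(Σ |c_η|²)² = 1` because `σ` is a permutation. The diagonal pairs contribute nothing since
`σ` fixes them.
-/

theorem sum_norm_sub_comp_perm_sq {ι K : Type*} [Fintype ι] [RCLike K] (σ : Equiv.Perm ι)
    (f : ι → K) :
    ∑ i, ‖f i - f (σ i)‖ ^ 2 =
      2 * (∑ i, ‖f i‖ ^ 2 - RCLike.re (∑ i, f i * starRingEnd K (f (σ i)))) := by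
  have hσ : ∑ i, ‖f (σ i)‖ ^ 2 = ∑ i, ‖f i‖ ^ 2 := Equiv.sum_comp σ fun i => ‖f i‖ ^ 2
  simp only [← RCLike.normSq_eq_def', RCLike.normSq_sub, sum_sub_distrib, sum_add_distrib,
    ← mul_sum, map_sum] at hσ ⊢
  rw [hσ]
  ring

theorem sum_norm_mul_sq {ι K : Type*} [Fintype ι] [RCLike K] (f : ι → K) :
    ∑ q : ι × ι, ‖f q.1 * f q.2‖ ^ 2 = (∑ i, ‖f i‖ ^ 2) ^ 2 := by
  rw [sq (∑ i, _), sum_mul_sum, Fintype.sum_prod_type]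
  simp only [norm_mul, mul_pow]

section MultiIndex

variable {n d : ℕ}

theorem swapIdx_self (γ : Finset (Fin n)) (η : Fin n → Fin d) : swapIdx γ η η = η := by
  funext k; simp [swapIdx]

theorem swapIdx_swapIdx (γ : Finset (Fin n)) (η₁ η₂ : Fin n → Fin d) :
    swapIdx γ (swapIdx γ η₁ η₂) (swapIdx γ η₂ η₁) = η₁ := by
  funext k; by_cases h : k ∈ γ <;> simp [swapIdx, h]

theorem swapIdx_mergeIdx (γ : Finset (Fin n)) (α₁ α₂ : {k // k ∈ γ} → Fin d)
    (β₁ β₂ : {k // k ∉ γ} → Fin d) :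
    swapIdx γ (mergeIdx γ α₁ β₁) (mergeIdx γ α₂ β₂) = mergeIdx γ α₂ β₁ := by
  funext k; by_cases h : k ∈ γ <;> simp [swapIdx, mergeIdx, h]

def swapPairPerm (γ : Finset (Fin n)) : Equiv.Perm ((Fin n → Fin d) × (Fin n → Fin d)) :=
  Function.Involutive.toPerm (fun q => (swapIdx γ q.1 q.2, swapIdx γ q.2 q.1)) fun q =>
    Prod.ext (swapIdx_swapIdx γ q.1 q.2) (swapIdx_swapIdx γ q.2 q.1)

@[simp]
theorem swapPairPerm_apply (γ : Finset (Fin n)) (q : (Fin n → Fin d) × (Fin n → Fin d)) :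
    swapPairPerm γ q = (swapIdx γ q.1 q.2, swapIdx γ q.2 q.1) :=
  rfl

theorem sum_mergeIdx {M : Type*} [AddCommMonoid M] (γ : Finset (Fin n))
    (f : (Fin n → Fin d) → M) :
    ∑ η, f η = ∑ α : {k // k ∈ γ} → Fin d, ∑ β : {k // k ∉ γ} → Fin d, f (mergeIdx γ α β) := by
  rw [← (Equiv.piEquivPiSubtypeProd (· ∈ γ) fun _ => Fin d).symm.sum_comp,
    Fintype.sum_prod_type]
  rfl

theorem trace_redMat_mul_self (γ : Finset (Fin n)) (c : (Fin n → Fin d) → ℂ) :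
    Matrix.trace (redMat γ c * redMat γ c) =
      ∑ q : (Fin n → Fin d) × (Fin n → Fin d), c q.1 * c q.2 *
        starRingEnd ℂ (c (swapIdx γ q.1 q.2) * c (swapIdx γ q.2 q.1)) := by
  simp only [Fintype.sum_prod_type, sum_mergeIdx γ, swapIdx_mergeIdx, Matrix.trace, Matrix.diag,
    Matrix.mul_apply, redMat, sum_mul, mul_sum]
  rw [sum_comm]
  refine sum_congr rfl fun α₁ _ => ?_
  rw [sum_comm]
  refine sum_congr rfl fun α₂ _ => sum_congr rfl fun β₁ _ => sum_congr rfl fun β₂ _ => ?_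
  simp only [map_mul]
  ring

end MultiIndex

/-- For a normalized `n`-qudit pure state `|ψ⟩ = Σ_η c_η |η⟩` and a bipartition `γ`,
the linear entropy `S_L(ρ_γ) = 2(1 − Tr ρ_γ²)` of the reduced state equals
`Σ_{η₁ ≠ η₂} |c_{η₁} c_{η₂} − c_{η₁^γ} c_{η₂^γ}|²`. -/
theorem linear_entropy_formula {n d : ℕ} (γ : Finset (Fin n)) (c : (Fin n → Fin d) → ℂ)
    (hnorm : ∑ η : Fin n → Fin d, Complex.normSq (c η) = 1) :
    2 * (1 - (Matrix.trace (redMat γ c * redMat γ c)).re) =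
      ∑ q ∈ univ.filter (fun q : (Fin n → Fin d) × (Fin n → Fin d) => q.1 ≠ q.2),
        ‖c q.1 * c q.2 - c (swapIdx γ q.1 q.2) * c (swapIdx γ q.2 q.1)‖ ^ 2 := by
  have hnorm' : ∑ η, ‖c η‖ ^ 2 = 1 := by simpa only [Complex.sq_norm] using hnorm
  have hdiag : ∀ q ∈ (univ : Finset ((Fin n → Fin d) × (Fin n → Fin d))),
      ‖c q.1 * c q.2 - c (swapIdx γ q.1 q.2) * c (swapIdx γ q.2 q.1)‖ ^ 2 ≠ 0 → q.1 ≠ q.2 := by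
    rintro ⟨η, η'⟩ - hne (rfl : η = η')
    simp [swapIdx_self] at hne
  have hexpand := sum_norm_sub_comp_perm_sq (swapPairPerm γ) fun q => c q.1 * c q.2
  simp only [swapPairPerm_apply, RCLike.re_to_complex, sum_norm_mul_sq c, hnorm', one_pow,
    ← trace_redMat_mul_self] at hexpand
  rw [sum_filter_of_ne hdiag, hexpand]
end

section
/- Let |ψ⟩ = Σ c_{ijk} |ijk⟩ be a normalized three-qubit pure state. Then √(S_L(ρ₁)) ≥ √2 · (|c_{001} c_{100}| − |c_{101} c_{000}| + |c_{010} c_{100}| − |c_{110} c_{000}|), where ρ₁ is the reduced state of the first qubit and S_L(ρ₁) = 2(1 − Tr ρ₁²). -/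
/-!
Write `ρ₁ = C C†` with `C` the `2 × 4` coefficient matrix whose rows are indexed by the first
qubit. For a `2 × 2` matrix `(Tr ρ)² − Tr ρ² = 2 det ρ`, so under normalization
`S_L(ρ₁) = 4 det ρ₁`, and by Cauchy–Binet `det ρ₁` is the sum of `|m|²` over the six `2 × 2`
minors `m` of `C`. Keeping only two minors `A`, `B`, the bound follows from
`√2 (‖A‖ + ‖B‖) ≤ 2 √(‖A‖² + ‖B‖²)` and the reverse triangle inequality.
-/

open Finset

/-- The reduced density matrix of the first qubit of a three-qubit pure state
with coefficients `c i j k`. -/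
noncomputable def rho1 (c : Fin 2 → Fin 2 → Fin 2 → ℂ) : Matrix (Fin 2) (Fin 2) ℂ :=
  fun i i' => ∑ j : Fin 2, ∑ k : Fin 2, c i j k * (starRingEnd ℂ) (c i' j k)

theorem Matrix.trace_sq_sub_trace_mul_self_fin_two {R : Type*} [CommRing R]
    (A : Matrix (Fin 2) (Fin 2) R) : A.trace ^ 2 - (A * A).trace = 2 * A.det := by
  simp only [Matrix.trace_fin_two, Matrix.det_fin_two, Matrix.mul_apply, Fin.sum_univ_two]
  ring

theorem Real.sqrt_two_mul_add_le_sqrt (x y : ℝ) : √2 * (x + y) ≤ √(4 * (x ^ 2 + y ^ 2)) := by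
  apply Real.le_sqrt_of_sq_le
  rw [mul_pow, Real.sq_sqrt zero_le_two]
  nlinarith [sq_nonneg (x - y)]

/-- The minor of `C` on the columns `(j, k)` and `(j', k')`. -/
def firstQubitMinor (c : Fin 2 → Fin 2 → Fin 2 → ℂ) (j k j' k' : Fin 2) : ℂ :=
  c 0 j k * c 1 j' k' - c 1 j k * c 0 j' k'

theorem trace_rho1 (c : Fin 2 → Fin 2 → Fin 2 → ℂ) :
    (rho1 c).trace = ↑(∑ i : Fin 2, ∑ j : Fin 2, ∑ k : Fin 2, Complex.normSq (c i j k)) := by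
  simp only [Matrix.trace, Matrix.diag, rho1, Complex.mul_conj]
  push_cast
  rfl

theorem det_rho1 (c : Fin 2 → Fin 2 → Fin 2 → ℂ) :
    (rho1 c).det = ↑(Complex.normSq (firstQubitMinor c 0 1 0 0) +
      Complex.normSq (firstQubitMinor c 1 0 0 0) + Complex.normSq (firstQubitMinor c 0 0 1 1) +
      Complex.normSq (firstQubitMinor c 0 1 1 0) + Complex.normSq (firstQubitMinor c 0 1 1 1) +
      Complex.normSq (firstQubitMinor c 1 0 1 1)) := by
  simp only [Matrix.det_fin_two, rho1, firstQubitMinor, Complex.ofReal_add, ← Complex.mul_conj,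
    map_sub, map_mul, Fin.sum_univ_two]
  ring

theorem two_mul_one_sub_re_trace_rho1_mul_self (c : Fin 2 → Fin 2 → Fin 2 → ℂ)
    (hnorm : ∑ i : Fin 2, ∑ j : Fin 2, ∑ k : Fin 2, Complex.normSq (c i j k) = 1) :
    2 * (1 - (Matrix.trace (rho1 c * rho1 c)).re) =
      4 * (Complex.normSq (firstQubitMinor c 0 1 0 0) +
        Complex.normSq (firstQubitMinor c 1 0 0 0) + Complex.normSq (firstQubitMinor c 0 0 1 1) +
        Complex.normSq (firstQubitMinor c 0 1 1 0) + Complex.normSq (firstQubitMinor c 0 1 1 1) +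
        Complex.normSq (firstQubitMinor c 1 0 1 1)) := by
  have h := congrArg Complex.re (rho1 c).trace_sq_sub_trace_mul_self_fin_two
  rw [trace_rho1, det_rho1, hnorm] at h
  simp only [Complex.ofReal_one, one_pow, Complex.sub_re, Complex.one_re, Complex.mul_re,
    Complex.re_ofNat, Complex.im_ofNat, Complex.ofReal_re, Complex.ofReal_im, zero_mul,
    sub_zero] at h
  linarith

/-- For a normalized three-qubit pure state `|ψ⟩ = Σ c_{ijk}|ijk⟩`,
`√(S_L(ρ₁)) ≥ √2 (|c₀₀₁ c₁₀₀| − |c₁₀₁ c₀₀₀| + |c₀₁₀ c₁₀₀| − |c₁₁₀ c₀₀₀|)`,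
where `S_L(ρ₁) = 2(1 − Tr ρ₁²)`. -/
theorem sqrt_linear_entropy_first_qubit_bound (c : Fin 2 → Fin 2 → Fin 2 → ℂ)
    (hnorm : ∑ i : Fin 2, ∑ j : Fin 2, ∑ k : Fin 2, Complex.normSq (c i j k) = 1) :
    Real.sqrt (2 * (1 - (Matrix.trace (rho1 c * rho1 c)).re)) ≥
      Real.sqrt 2 *
        (‖c 0 0 1 * c 1 0 0‖ - ‖c 1 0 1 * c 0 0 0‖ +
         ‖c 0 1 0 * c 1 0 0‖ - ‖c 1 1 0 * c 0 0 0‖) := by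
  have hA : ‖c 0 0 1 * c 1 0 0‖ - ‖c 1 0 1 * c 0 0 0‖ ≤ ‖firstQubitMinor c 0 1 0 0‖ :=
    norm_sub_norm_le _ _
  have hB : ‖c 0 1 0 * c 1 0 0‖ - ‖c 1 1 0 * c 0 0 0‖ ≤ ‖firstQubitMinor c 1 0 0 0‖ :=
    norm_sub_norm_le _ _
  calc Real.sqrt 2 * (‖c 0 0 1 * c 1 0 0‖ - ‖c 1 0 1 * c 0 0 0‖ +
         ‖c 0 1 0 * c 1 0 0‖ - ‖c 1 1 0 * c 0 0 0‖)
      ≤ Real.sqrt 2 * (‖firstQubitMinor c 0 1 0 0‖ + ‖firstQubitMinor c 1 0 0 0‖) := by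
        gcongr
        linarith
    _ ≤ Real.sqrt (4 * (‖firstQubitMinor c 0 1 0 0‖ ^ 2 + ‖firstQubitMinor c 1 0 0 0‖ ^ 2)) :=
        Real.sqrt_two_mul_add_le_sqrt _ _
    _ ≤ Real.sqrt (2 * (1 - (Matrix.trace (rho1 c * rho1 c)).re)) := by
      rw [two_mul_one_sub_re_trace_rho1_mul_self c hnorm, Complex.sq_norm, Complex.sq_norm]
      apply Real.sqrt_le_sqrt
      linarith [Complex.normSq_nonneg (firstQubitMinor c 0 0 1 1),
        Complex.normSq_nonneg (firstQubitMinor c 0 1 1 0),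
        Complex.normSq_nonneg (firstQubitMinor c 0 1 1 1),
        Complex.normSq_nonneg (firstQubitMinor c 1 0 1 1)]
end
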